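/- Fix d_A, d_B ≥ 1, a unit vector ψ ∈ ℂ² ⊗ ℂ^{d_A} ⊗ ℂ^{d_B}, and p_err ≥ 0. Let V_0, V_1 be orthogonal projections on ℂ² with V_0 + V_1 = I, let {A_a}_{a∈{0,1,⊥}} be a POVM on ℂ^{d_A} and {B_a}_{a∈{0,1,⊥}} a POVM on ℂ^{d_B}. Assume: (i) ⟨I·A_a·B_b⟩_ψ = 0 for all a ≠ b in {0,1,⊥}; (ii) ⟨V_1·A_0·B_0⟩_ψ ≤ p_err·⟨V_1·(A_0+A_1)·(B_0+B_1)⟩_ψ and ⟨V_0·A_1·B_1⟩_ψ ≤ p_err·⟨V_0·(A_0+A_1)·(B_0+B_1)⟩_ψ. Then ⟨V_1·A_0·I⟩_ψ + ⟨V_0·A_1·I⟩_ψ ≤ p_err·(⟨I·A_0·B_0⟩_ψ + ⟨I·A_1·B_1⟩_ψ), and likewise ⟨V_1·I·B_0⟩_ψ + ⟨V_0·I·B_1⟩_ψ ≤ p_err·(⟨I·A_0·B_0⟩_ψ + ⟨I·A_1·B_1⟩_ψ). -/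

import Mathlib

open Matrix Kronecker BigOperators
open scoped ComplexOrder

noncomputable section

/-- ⟨ψ, (V ⊗ A ⊗ B) ψ⟩ as a real number. -/
def exval {dA dB : ℕ} (χ : Fin 2 × Fin dA × Fin dB → ℂ)
    (V : Matrix (Fin 2) (Fin 2) ℂ) (A : Matrix (Fin dA) (Fin dA) ℂ)
    (B : Matrix (Fin dB) (Fin dB) ℂ) : ℝ :=
  (star χ ⬝ᵥ (V ⊗ₖ (A ⊗ₖ B)).mulVec χ).re

/-- A POVM with outcomes {0, 1, ⊥} (⊥ encoded as the index 2). -/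
def IsPOVM {d : ℕ} (A : Fin 3 → Matrix (Fin d) (Fin d) ℂ) : Prop :=
  (∀ a, (A a).PosSemidef) ∧ A 0 + A 1 + A 2 = 1

/-!
Both summands of ⟨I·A_a·B_b⟩ = ⟨V_0·A_a·B_b⟩ + ⟨V_1·A_a·B_b⟩ are nonnegative, so for a ≠ b
each of them vanishes. Summing the POVM B next to A_a therefore leaves only the diagonal term
⟨V_k·A_a·B_a⟩ (and symmetrically for A), and both bounds become the sum of the two hypotheses
on the error rates.
-/

section exval

variable {dA dB : ℕ} (ψ : Fin 2 × Fin dA × Fin dB → ℂ)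

lemma exval_add_left (V V' : Matrix (Fin 2) (Fin 2) ℂ) (A : Matrix (Fin dA) (Fin dA) ℂ)
    (B : Matrix (Fin dB) (Fin dB) ℂ) :
    exval ψ (V + V') A B = exval ψ V A B + exval ψ V' A B := by
  simp [exval, add_kronecker, add_mulVec, dotProduct_add]

lemma exval_add_mid (V : Matrix (Fin 2) (Fin 2) ℂ) (A A' : Matrix (Fin dA) (Fin dA) ℂ)
    (B : Matrix (Fin dB) (Fin dB) ℂ) :
    exval ψ V (A + A') B = exval ψ V A B + exval ψ V A' B := by
  simp [exval, add_kronecker, kronecker_add, add_mulVec, dotProduct_add]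

lemma exval_add_right (V : Matrix (Fin 2) (Fin 2) ℂ) (A : Matrix (Fin dA) (Fin dA) ℂ)
    (B B' : Matrix (Fin dB) (Fin dB) ℂ) :
    exval ψ V A (B + B') = exval ψ V A B + exval ψ V A B' := by
  simp [exval, kronecker_add, add_mulVec, dotProduct_add]

variable {ψ}

lemma exval_nonneg {V : Matrix (Fin 2) (Fin 2) ℂ} {A : Matrix (Fin dA) (Fin dA) ℂ}
    {B : Matrix (Fin dB) (Fin dB) ℂ} (hV : V.PosSemidef) (hA : A.PosSemidef)
    (hB : B.PosSemidef) : 0 ≤ exval ψ V A B :=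
  (hV.kronecker (hA.kronecker hB)).re_dotProduct_nonneg ψ

lemma exval_eq_zero_of_add_eq_zero {V V' : Matrix (Fin 2) (Fin 2) ℂ}
    {A : Matrix (Fin dA) (Fin dA) ℂ} {B : Matrix (Fin dB) (Fin dB) ℂ}
    (hV : V.PosSemidef) (hV' : V'.PosSemidef) (hA : A.PosSemidef) (hB : B.PosSemidef)
    (h : exval ψ (V + V') A B = 0) : exval ψ V A B = 0 := by
  rw [exval_add_left] at h
  linarith [exval_nonneg (ψ := ψ) hV hA hB, exval_nonneg (ψ := ψ) hV' hA hB]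

lemma exval_one_right_of_isPOVM {V : Matrix (Fin 2) (Fin 2) ℂ}
    {A : Matrix (Fin dA) (Fin dA) ℂ} {B : Fin 3 → Matrix (Fin dB) (Fin dB) ℂ}
    (hB : IsPOVM B) (b : Fin 3) (hoff : ∀ b' ≠ b, exval ψ V A (B b') = 0) :
    exval ψ V A 1 = exval ψ V A (B b) := by
  have hsum : exval ψ V A 1 = ∑ b', exval ψ V A (B b') := by
    rw [← hB.2, exval_add_right, exval_add_right, Fin.sum_univ_three]
  rw [hsum, Fintype.sum_eq_single b hoff]

lemma exval_one_mid_of_isPOVM {V : Matrix (Fin 2) (Fin 2) ℂ}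
    {A : Fin 3 → Matrix (Fin dA) (Fin dA) ℂ} {B : Matrix (Fin dB) (Fin dB) ℂ}
    (hA : IsPOVM A) (a : Fin 3) (hoff : ∀ a' ≠ a, exval ψ V (A a') B = 0) :
    exval ψ V 1 B = exval ψ V (A a) B := by
  have hsum : exval ψ V 1 B = ∑ a', exval ψ V (A a') B := by
    rw [← hA.2, exval_add_mid, exval_add_mid, Fin.sum_univ_three]
  rw [hsum, Fintype.sum_eq_single a hoff]

end exval

lemma Matrix.PosSemidef.of_conjTranspose_eq_of_mul_self_eq {n : Type*} [Fintype n]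
    {P : Matrix n n ℂ} (hself : Pᴴ = P) (hidem : P * P = P) : P.PosSemidef := by
  have h := posSemidef_conjTranspose_mul_self P
  rwa [hself, hidem] at h

theorem perr_marginal_bounds_general {dA dB : ℕ}
    (ψ : Fin 2 × Fin dA × Fin dB → ℂ)
    (perr : ℝ)
    (V : Fin 2 → Matrix (Fin 2) (Fin 2) ℂ)
    (hVproj : ∀ a, (V a)ᴴ = V a ∧ V a * V a = V a)
    (hVsum : V 0 + V 1 = 1)
    (A : Fin 3 → Matrix (Fin dA) (Fin dA) ℂ)
    (B : Fin 3 → Matrix (Fin dB) (Fin dB) ℂ)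
    (hA : IsPOVM A) (hB : IsPOVM B)
    (hzero : ∀ a b : Fin 3, a ≠ b → exval ψ 1 (A a) (B b) = 0)
    (herr1 : exval ψ (V 1) (A 0) (B 0) ≤
      perr * exval ψ (V 1) (A 0 + A 1) (B 0 + B 1))
    (herr2 : exval ψ (V 0) (A 1) (B 1) ≤
      perr * exval ψ (V 0) (A 0 + A 1) (B 0 + B 1)) :
    exval ψ (V 1) (A 0) 1 + exval ψ (V 0) (A 1) 1 ≤
      perr * (exval ψ 1 (A 0) (B 0) + exval ψ 1 (A 1) (B 1)) ∧
    exval ψ (V 1) 1 (B 0) + exval ψ (V 0) 1 (B 1) ≤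
      perr * (exval ψ 1 (A 0) (B 0) + exval ψ 1 (A 1) (B 1)) := by
  have hVpsd k := PosSemidef.of_conjTranspose_eq_of_mul_self_eq (hVproj k).1 (hVproj k).2
  have hoff : ∀ k : Fin 2, ∀ a b : Fin 3, a ≠ b → exval ψ (V k) (A a) (B b) = 0 := by
    intro k a b hab
    have hsum := hzero a b hab
    rw [← hVsum] at hsum
    fin_cases k
    · exact exval_eq_zero_of_add_eq_zero (hVpsd 0) (hVpsd 1) (hA.1 a) (hB.1 b) hsum
    · rw [add_comm] at hsum
      exact exval_eq_zero_of_add_eq_zero (hVpsd 1) (hVpsd 0) (hA.1 a) (hB.1 b) hsum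
  have hmargB k a : exval ψ (V k) (A a) 1 = exval ψ (V k) (A a) (B a) :=
    exval_one_right_of_isPOVM hB a fun b hb => hoff k a b hb.symm
  have hmargA k b : exval ψ (V k) 1 (B b) = exval ψ (V k) (A b) (B b) :=
    exval_one_mid_of_isPOVM hA b fun a ha => hoff k a b ha
  have hdiag k : exval ψ (V k) (A 0 + A 1) (B 0 + B 1) =
      exval ψ (V k) (A 0) (B 0) + exval ψ (V k) (A 1) (B 1) := by
    rw [exval_add_mid, exval_add_right, exval_add_right, hoff k 0 1 (by decide),
      hoff k 1 0 (by decide), add_zero, zero_add]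
  have hsplit a b :
      exval ψ 1 (A a) (B b) = exval ψ (V 0) (A a) (B b) + exval ψ (V 1) (A a) (B b) := by
    rw [← hVsum, exval_add_left]
  rw [hdiag] at herr1 herr2
  rw [hmargB, hmargB, hmargA, hmargA, hsplit, hsplit]
  constructor <;> linarith

theorem perr_marginal_bounds {dA dB : ℕ} (hdA : 1 ≤ dA) (hdB : 1 ≤ dB)
    (ψ : Fin 2 × Fin dA × Fin dB → ℂ) (hψ : ∑ i, ‖ψ i‖ ^ 2 = 1)
    (perr : ℝ) (hperr : 0 ≤ perr)
    (V : Fin 2 → Matrix (Fin 2) (Fin 2) ℂ)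
    (hVproj : ∀ a, (V a)ᴴ = V a ∧ V a * V a = V a)
    (hVsum : V 0 + V 1 = 1)
    (A : Fin 3 → Matrix (Fin dA) (Fin dA) ℂ)
    (B : Fin 3 → Matrix (Fin dB) (Fin dB) ℂ)
    (hA : IsPOVM A) (hB : IsPOVM B)
    (hzero : ∀ a b : Fin 3, a ≠ b → exval ψ 1 (A a) (B b) = 0)
    (herr1 : exval ψ (V 1) (A 0) (B 0) ≤
      perr * exval ψ (V 1) (A 0 + A 1) (B 0 + B 1))
    (herr2 : exval ψ (V 0) (A 1) (B 1) ≤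
      perr * exval ψ (V 0) (A 0 + A 1) (B 0 + B 1)) :
    exval ψ (V 1) (A 0) 1 + exval ψ (V 0) (A 1) 1 ≤
      perr * (exval ψ 1 (A 0) (B 0) + exval ψ 1 (A 1) (B 1)) ∧
    exval ψ (V 1) 1 (B 0) + exval ψ (V 0) 1 (B 1) ≤
      perr * (exval ψ 1 (A 0) (B 0) + exval ψ 1 (A 1) (B 1)) :=
  perr_marginal_bounds_general ψ perr V hVproj hVsum A B hA hB hzero herr1 herr2
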